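/- arXiv:2011.07604 — 2 statements merged into one kernel-verified Lean document; each statement's English description precedes it below -/
import Mathlib

section
/- Let P be an n×n row-stochastic matrix and let π ∈ ℝⁿ satisfy π ≥ 0 entrywise and πᵀP = πᵀ. Then for every k ≥ 1 one has πᵀF_{k+1} ≤ πᵀF_k entrywise, and consequently πᵀF_k ≤ πᵀ entrywise for all k ≥ 1. -/
/-!
Since `πᵀ P = πᵀ`, left multiplication by `πᵀ` absorbs the leading `P` in
`F_{k+1} = P (F_k - Diag F_k)`, so `πᵀ F_{k+1} = πᵀ F_k - πᵀ Diag F_k`; the subtracted term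
`π_j F_k(j,j)` is nonnegative. Chaining these decreases down to `πᵀ F_1 = πᵀ P = πᵀ` gives the bound.
-/

/-- First-hitting-time probability matrices: `hitF P t` is `F_{t+1}`, i.e.
`F_1 = P` and `F_{k+1} = P (F_k - Diag(F_k))`. -/
def hitF {α : Type*} [Fintype α] [DecidableEq α] (P : Matrix α α ℝ) : ℕ → Matrix α α ℝ
  | 0 => P
  | k + 1 => P * (hitF P k - Matrix.diagonal fun i => hitF P k i i)

open Matrix

section HittingTimes

variable {α : Type*} [Fintype α] [DecidableEq α] (P : Matrix α α ℝ)

lemma hitF_succ_apply (k : ℕ) (i j : α) :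
    hitF P (k + 1) i j = ∑ l, P i l * (if l = j then 0 else hitF P k l j) := by
  simp only [hitF, mul_apply, Matrix.sub_apply, diagonal_apply]
  refine Finset.sum_congr rfl fun l _ => ?_
  split_ifs with h <;> simp [h]

lemma hitF_nonneg (hP0 : ∀ i j, 0 ≤ P i j) (k : ℕ) (i j : α) : 0 ≤ hitF P k i j := by
  induction k generalizing i j with
  | zero => exact hP0 i j
  | succ k ih =>
    rw [hitF_succ_apply]
    refine Finset.sum_nonneg fun l _ => mul_nonneg (hP0 i l) ?_
    split_ifs
    exacts [le_rfl, ih l j]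

lemma vecMul_hitF_succ {π : α → ℝ} (hπP : π ᵥ* P = π) (k : ℕ) (j : α) :
    (π ᵥ* hitF P (k + 1)) j = (π ᵥ* hitF P k) j - π j * hitF P k j j := by
  rw [hitF, ← vecMul_vecMul, hπP, vecMul_sub, Pi.sub_apply, vecMul_diagonal]

end HittingTimes

theorem stmt_1_general (n : ℕ) (P : Matrix (Fin n) (Fin n) ℝ)
    (hP0 : ∀ i j, 0 ≤ P i j)
    (π : Fin n → ℝ) (hπ0 : ∀ i, 0 ≤ π i)
    (hπP : ∀ j, ∑ i, π i * P i j = π j) :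
    (∀ k : ℕ, ∀ j : Fin n,
        ∑ i, π i * hitF P (k + 1) i j ≤ ∑ i, π i * hitF P k i j) ∧
    (∀ k : ℕ, ∀ j : Fin n, ∑ i, π i * hitF P k i j ≤ π j) := by
  have hπP' : π ᵥ* P = π := funext hπP
  have decreasing : ∀ k j, ∑ i, π i * hitF P (k + 1) i j ≤ ∑ i, π i * hitF P k i j := by
    intro k j
    have h := vecMul_hitF_succ P hπP' k j
    simp only [vecMul, dotProduct] at h
    rw [h]
    exact sub_le_self _ (mul_nonneg (hπ0 j) (hitF_nonneg P hP0 k j j))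
  refine ⟨decreasing, fun k j => ?_⟩
  induction k with
  | zero => exact (hπP j).le
  | succ k ih => exact (decreasing k j).trans ih

/-- For a row-stochastic `P` with nonnegative stationary `π`, one has
`πᵀ F_{k+1} ≤ πᵀ F_k` entrywise for all `k ≥ 1`, and consequently `πᵀ F_k ≤ πᵀ`
entrywise for all `k ≥ 1`. (Here `hitF P k = F_{k+1}`.) -/
theorem stmt_1 (n : ℕ) (P : Matrix (Fin n) (Fin n) ℝ)
    (hP0 : ∀ i j, 0 ≤ P i j) (hP1 : ∀ i, ∑ j, P i j = 1)
    (π : Fin n → ℝ) (hπ0 : ∀ i, 0 ≤ π i)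
    (hπP : ∀ j, ∑ i, π i * P i j = π j) :
    (∀ k : ℕ, ∀ j : Fin n,
        ∑ i, π i * hitF P (k + 1) i j ≤ ∑ i, π i * hitF P k i j) ∧
    (∀ k : ℕ, ∀ j : Fin n, ∑ i, π i * hitF P k i j ≤ π j) :=
  stmt_1_general n P hP0 π hπ0 hπP
end

section
/- Let n ≥ 3, let P be an n×n row-stochastic matrix, and let i ∈ {1,…,n} be a leaf node with unique neighbor j ≠ i, meaning P(i,l) = 0 and P(l,i) = 0 for every l ∉ {i, j}. Then for every τ ≥ 2 and every k ∉ {i, j}, one has Σ_{t=1}^{τ} F_t(i,i) ≥ Σ_{t=1}^{τ} F_t(k,i), i.e., ℙ(T_ii ≤ τ) ≥ ℙ(T_ki ≤ τ). -/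
open Finset

section CaptureProbability

variable {α : Type*} [Fintype α] [DecidableEq α] {P : Matrix α α ℝ}

def captureProb (P : Matrix α α ℝ) (τ : ℕ) (a b : α) : ℝ :=
  ∑ t ∈ range τ, hitF P t a b

lemma hitF_succ_apply_s9 (P : Matrix α α ℝ) (t : ℕ) (a b : α) :
    hitF P (t + 1) a b = ∑ m ∈ univ.erase b, P a m * hitF P t m b := by
  rw [hitF, Matrix.mul_apply, ← add_sum_erase _ _ (mem_univ b), Matrix.sub_apply,
    Matrix.diagonal_apply_eq, sub_self, mul_zero, zero_add]
  refine sum_congr rfl fun m hm => ?_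
  rw [Matrix.sub_apply, Matrix.diagonal_apply_ne _ (ne_of_mem_erase hm), sub_zero]

lemma hitF_nonneg_s9 (hP0 : ∀ a b, 0 ≤ P a b) (t : ℕ) (a b : α) : 0 ≤ hitF P t a b := by
  induction t generalizing a with
  | zero => exact hP0 a b
  | succ t ih =>
    rw [hitF_succ_apply_s9]
    exact sum_nonneg fun m _ => mul_nonneg (hP0 a m) (ih m)

lemma captureProb_succ (P : Matrix α α ℝ) (σ : ℕ) (a b : α) :
    captureProb P (σ + 1) a b = P a b + ∑ m ∈ univ.erase b, P a m * captureProb P σ m b := by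
  simp only [captureProb, sum_range_succ', hitF_succ_apply_s9, mul_sum]
  rw [sum_comm, add_comm]
  rfl

lemma captureProb_nonneg (hP0 : ∀ a b, 0 ≤ P a b) (τ : ℕ) (a b : α) :
    0 ≤ captureProb P τ a b :=
  sum_nonneg fun t _ => hitF_nonneg_s9 hP0 t a b

lemma captureProb_le_succ (hP0 : ∀ a b, 0 ≤ P a b) (τ : ℕ) (a b : α) :
    captureProb P τ a b ≤ captureProb P (τ + 1) a b := by
  rw [captureProb, captureProb, sum_range_succ]
  exact le_add_of_nonneg_right (hitF_nonneg_s9 hP0 τ a b)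

lemma row_sum_erase_le_one (hP0 : ∀ a b, 0 ≤ P a b) (hP1 : ∀ a, ∑ b, P a b = 1) (a b : α) :
    ∑ m ∈ univ.erase b, P a m ≤ 1 :=
  hP1 a ▸ sum_le_sum_of_subset_of_nonneg (erase_subset b univ) fun m _ _ => hP0 a m

lemma captureProb_le_one (hP0 : ∀ a b, 0 ≤ P a b) (hP1 : ∀ a, ∑ b, P a b = 1)
    (τ : ℕ) (a b : α) : captureProb P τ a b ≤ 1 := by
  induction τ generalizing a with
  | zero => simp [captureProb]
  | succ τ ih =>
    calc captureProb P (τ + 1) a b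
        ≤ P a b + ∑ m ∈ univ.erase b, P a m := by
          rw [captureProb_succ]
          gcongr with m
          exact mul_le_of_le_one_right (hP0 a m) (ih m)
      _ = 1 := by rw [add_sum_erase _ _ (mem_univ b), hP1 a]

lemma captureProb_succ_le_of_unique_entry (hP0 : ∀ a b, 0 ≤ P a b)
    (hP1 : ∀ a, ∑ b, P a b = 1) {i j : α} (hentry : ∀ l, l ≠ i → l ≠ j → P l i = 0)
    (σ : ℕ) {k : α} (hki : k ≠ i) (hkj : k ≠ j) :
    captureProb P (σ + 1) k i ≤ captureProb P σ j i := by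
  induction σ generalizing k with
  | zero => simp [captureProb, hitF, hentry k hki hkj]
  | succ σ ih =>
    have hbound : ∀ m ∈ univ.erase i, captureProb P (σ + 1) m i ≤ captureProb P (σ + 1) j i := by
      intro m hm
      by_cases hmj : m = j
      · rw [hmj]
      · exact (ih (ne_of_mem_erase hm) hmj).trans (captureProb_le_succ hP0 σ j i)
    calc captureProb P (σ + 1 + 1) k i
        = ∑ m ∈ univ.erase i, P k m * captureProb P (σ + 1) m i := by
          rw [captureProb_succ, hentry k hki hkj, zero_add]
      _ ≤ (∑ m ∈ univ.erase i, P k m) * captureProb P (σ + 1) j i := by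
          rw [sum_mul]
          exact sum_le_sum fun m hm => mul_le_mul_of_nonneg_left (hbound m hm) (hP0 k m)
      _ ≤ captureProb P (σ + 1) j i :=
          mul_le_of_le_one_left (captureProb_nonneg hP0 _ j i) (row_sum_erase_le_one hP0 hP1 k i)

lemma captureProb_le_captureProb_succ_of_leaf (hP0 : ∀ a b, 0 ≤ P a b)
    (hP1 : ∀ a, ∑ b, P a b = 1) {i j : α} (hji : j ≠ i)
    (hleaf : ∀ l, l ≠ i → l ≠ j → P i l = 0) (σ : ℕ) :
    captureProb P σ j i ≤ captureProb P (σ + 1) i i := by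
  have hrow : P i i + P i j = 1 := by
    rw [← hP1 i, sum_eq_add_of_mem i j (mem_univ i) (mem_univ j) hji.symm
      fun l _ hl => hleaf l hl.1 hl.2]
  have hstep : ∑ m ∈ univ.erase i, P i m * captureProb P σ m i = P i j * captureProb P σ j i :=
    sum_eq_single_of_mem j (mem_erase.2 ⟨hji, mem_univ j⟩) fun m hm hmj => by
      rw [hleaf m (ne_of_mem_erase hm) hmj, zero_mul]
  rw [captureProb_succ, hstep]
  calc captureProb P σ j i
      = P i i * captureProb P σ j i + P i j * captureProb P σ j i := by
        rw [← add_mul, hrow, one_mul]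
    _ ≤ P i i + P i j * captureProb P σ j i := by
        gcongr
        exact mul_le_of_le_one_right (hP0 i i) (captureProb_le_one hP0 hP1 σ j i)

end CaptureProbability

theorem stmt_9_general (n : ℕ) (P : Matrix (Fin n) (Fin n) ℝ)
    (hP0 : ∀ a b, 0 ≤ P a b) (hP1 : ∀ a, ∑ b, P a b = 1)
    (i j : Fin n) (hij : j ≠ i)
    (hleaf : ∀ l : Fin n, l ≠ i → l ≠ j → P i l = 0 ∧ P l i = 0)
    (τ : ℕ) (k : Fin n) (hki : k ≠ i) (hkj : k ≠ j) :
    ∑ t ∈ Finset.range τ, hitF P t k i ≤ ∑ t ∈ Finset.range τ, hitF P t i i := by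
  cases τ with
  | zero => simp
  | succ σ =>
    calc captureProb P (σ + 1) k i
        ≤ captureProb P σ j i :=
          captureProb_succ_le_of_unique_entry hP0 hP1 (fun l hli hlj => (hleaf l hli hlj).2) σ
            hki hkj
      _ ≤ captureProb P (σ + 1) i i :=
          captureProb_le_captureProb_succ_of_leaf hP0 hP1 hij
            (fun l hli hlj => (hleaf l hli hlj).1) σ

/-- Dominated strategy on leaf nodes: if `i` is a leaf node with unique neighbor `j`,
then for every `τ ≥ 2` and every node `k ∉ {i, j}`,
`ℙ(T_ii ≤ τ) ≥ ℙ(T_ki ≤ τ)`. -/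
theorem stmt_9 (n : ℕ) (hn : 3 ≤ n) (P : Matrix (Fin n) (Fin n) ℝ)
    (hP0 : ∀ a b, 0 ≤ P a b) (hP1 : ∀ a, ∑ b, P a b = 1)
    (i j : Fin n) (hij : j ≠ i)
    (hleaf : ∀ l : Fin n, l ≠ i → l ≠ j → P i l = 0 ∧ P l i = 0)
    (τ : ℕ) (hτ : 2 ≤ τ) (k : Fin n) (hki : k ≠ i) (hkj : k ≠ j) :
    ∑ t ∈ Finset.range τ, hitF P t k i ≤ ∑ t ∈ Finset.range τ, hitF P t i i :=
  stmt_9_general n P hP0 hP1 i j hij hleaf τ k hki hkj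
end
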